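/- arXiv:math/0701282 — 2 statements merged into one kernel-verified Lean document; each statement's English description precedes it below -/
import Mathlib

section
/- Let ψ ∈ T, let r ∈ _y(kQ)_x, and let r' be a subexpression of ψ(r). Let ≃ be the smallest equivalence relation on the set of paths in Q such that u ≃ v whenever v ∈ supp(ψ(u)). Assume that for all u, v ∈ supp(ψ(r)) with u ≃ v one has u ∈ supp(r') if and only if v ∈ supp(r'). Then ψ^{-1}(r') is a subexpression of r. -/
attribute [local instance] Classical.propDecidable

/-- A quiver given by a set of vertices, a set of arrows and source/target maps. -/
structure Quiv where
  V : Type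
  A : Type
  s : A → V
  t : A → V

namespace Quiv

section Basic

variable (Q : Quiv)

/-- A (nontrivial) path is a nonempty list of composable arrows, listed in the
order they are traversed. -/
def IsPath (p : List Q.A) : Prop :=
  p ≠ [] ∧ p.Chain' (fun a b => Q.t a = Q.s b)

/-- Source of a nonempty list of arrows. -/
def src (p : List Q.A) : Option Q.V := p.head?.map Q.s

/-- Target of a nonempty list of arrows. -/
def tgt (p : List Q.A) : Option Q.V := p.getLast?.map Q.t

/-- `Q` has no oriented cycle: no nontrivial path has equal source and target. -/
def NoCycle : Prop := ∀ p, Q.IsPath p → Q.src p ≠ Q.tgt p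

/-- `Q` has no multiple arrows: distinct arrows never have both the same source
and the same target. -/
def NoMultipleArrows : Prop :=
  ∀ a b : Q.A, Q.s a = Q.s b → Q.t a = Q.t b → a = b

/-- A bypass `(α, u)`: `u` is a path parallel to the arrow `α` and distinct from it. -/
def IsBypass (α : Q.A) (u : List Q.A) : Prop :=
  Q.IsPath u ∧ Q.src u = some (Q.s α) ∧ Q.tgt u = some (Q.t α) ∧ u ≠ [α]

/-- `Repl n u v` : `v` is obtained from `u` by replacing `n` of its arrows (at
increasing positions) by bypass paths. -/
inductive Repl : ℕ → List Q.A → List Q.A → Prop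
  | nil : Repl 0 [] []
  | keep (a : Q.A) {n : ℕ} {u v : List Q.A} : Repl n u v → Repl n (a :: u) (a :: v)
  | repl {a : Q.A} {p : List Q.A} {n : ℕ} {u v : List Q.A} :
      Q.IsBypass a p → Repl n u v → Repl (n + 1) (a :: u) (p ++ v)

/-- `v` is derived of `u` of order `t`. -/
def DerivedOfOrder (t : ℕ) (u v : List Q.A) : Prop := 1 ≤ t ∧ Q.Repl t u v

/-- `v` is derived of `u` (of some order `t ≥ 1`). -/
def Derived (u v : List Q.A) : Prop := ∃ t, Q.DerivedOfOrder t u v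

/-- `W(α)` : the number of bypasses of the form `(α, u)`. -/
noncomputable def Wa (α : Q.A) : ℕ := Nat.card {u : List Q.A // Q.IsBypass α u}

/-- `W(u)` for a path `u = α_n ⋯ α_1` : the sum of the `W(α_i)`. -/
noncomputable def Wp (u : List Q.A) : ℕ := (u.map Q.Wa).sum

/-- A linear order `<` on the nontrivial paths of `Q` refining the `W`-ordering and
compatible with concatenation, as in Le Meur's Definition 2.5. -/
structure PathOrder where
  lt : List Q.A → List Q.A → Prop
  irrefl : ∀ p, Q.IsPath p → ¬ lt p p
  trans' : ∀ p q r, lt p q → lt q r → lt p r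
  total' : ∀ p q, Q.IsPath p → Q.IsPath q → p ≠ q → lt p q ∨ lt q p
  wlt : ∀ p q, Q.IsPath p → Q.IsPath q → Q.Wp p < Q.Wp q → lt p q
  concat : ∀ u u' v v' : List Q.A, lt v u → lt v' u' →
    Q.IsPath (v ++ v') → Q.IsPath (u ++ u') → lt (v ++ v') (u ++ u')

end Basic

/-- Lexicographic (strict) order on bypasses: `(α,u) < (β,v)` iff `α < β`, or
`α = β` and `u < v`. -/
def PathOrder.bplt {Q : Quiv} (o : Q.PathOrder) (b c : Q.A × List Q.A) : Prop :=
  o.lt [b.1] [c.1] ∨ (b.1 = c.1 ∧ o.lt b.2 c.2)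

/-- Lexicographic non-strict order on bypasses. -/
def PathOrder.bple {Q : Quiv} (o : Q.PathOrder) (b c : Q.A × List Q.A) : Prop :=
  o.bplt b c ∨ b = c

section Linear

variable (Q : Quiv) (k : Type) [Field k]

/-- Concatenation product on the free `k`-module on lists of arrows (the morphism
spaces of the path category `kQ`). -/
noncomputable def mulF (f g : List Q.A →₀ k) : List Q.A →₀ k :=
  f.sum fun p c => g.sum fun q d => Finsupp.single (p ++ q) (c * d)

/-- Image of the arrow `a` under the transvection `φ_{α,u,τ}`. -/
noncomputable def arrowImg (α : Q.A) (u : List Q.A) (τ : k) (a : Q.A) : List Q.A →₀ k :=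
  if a = α then Finsupp.single [a] 1 + τ • Finsupp.single u 1 else Finsupp.single [a] 1

/-- Image of a path under the transvection `φ_{α,u,τ}`. -/
noncomputable def substPoly (α : Q.A) (u : List Q.A) (τ : k) : List Q.A → (List Q.A →₀ k)
  | [] => Finsupp.single [] 1
  | a :: rest => mulF Q k (arrowImg Q k α u τ a) (substPoly α u τ rest)

/-- The transvection `φ_{α,u,τ}` as a linear endomorphism of `kQ` : it is the
`k`-linear automorphism of `kQ` fixing every vertex, sending `α` to `α + τ u`, and
fixing every other arrow. -/
noncomputable def substMap (α : Q.A) (u : List Q.A) (τ : k) :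
    Module.End k (List Q.A →₀ k) :=
  Finsupp.linearCombination k (substPoly Q k α u τ)

/-- `ψ` lies in the group `T` generated by the transvections, i.e. it is a finite
product of transvections. -/
def MemT (ψ : Module.End k (List Q.A →₀ k)) : Prop :=
  ∃ L : List (Q.A × List Q.A × k),
    (∀ x ∈ L, Q.IsBypass x.1 x.2.1) ∧
    ψ = (L.map fun x => substMap Q k x.1 x.2.1 x.2.2).prod

/-- `r'` is a subexpression of `r`. -/
def Subexpr (r' r : List Q.A →₀ k) : Prop :=
  r'.support ⊆ r.support ∧ ∀ p ∈ r'.support, r' p = r p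

/-- A minimal relation of `I` : a nonzero `r ∈ I` such that `0` and `r` are the only
subexpressions of `r` lying in `I`. -/
def IsMinimalRel (I : Submodule k (List Q.A →₀ k)) (r : List Q.A →₀ k) : Prop :=
  r ∈ I ∧ r ≠ 0 ∧ ∀ r', Subexpr Q k r' r → r' ∈ I → r' = 0 ∨ r' = r

/-- `ReplExp g u v c` : `v` is obtained from the path `u` by replacing some of its
arrows `a` (at increasing positions) by paths `w ∈ supp(g a)`, `w ≠ a`, and `c` is
the product of the corresponding coefficients `w^*(g a)`. -/
inductive ReplExp (g : Q.A → (List Q.A →₀ k)) : List Q.A → List Q.A → k → Prop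
  | nil : ReplExp g [] [] 1
  | keep (a : Q.A) {u v : List Q.A} {c : k} :
      ReplExp g u v c → ReplExp g (a :: u) (a :: v) c
  | repl (a : Q.A) {w u v : List Q.A} {c : k} :
      w ∈ (g a).support → w ≠ [a] → ReplExp g u v c →
      ReplExp g (a :: u) (w ++ v) ((g a) w * c)

/-- The homotopy relation `∼_I` on walks. A walk is a list of pairs `(a, d)` where
`a` is an arrow and `d` is `true` for `a` and `false` for the formal inverse `a⁻¹`;
the relation is the smallest equivalence relation compatible with concatenation,
cancelling `a a⁻¹` and `a⁻¹ a`, and identifying any two paths lying in the support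
of a minimal relation of `I`. -/
inductive Homotopic (I : Submodule k (List Q.A →₀ k)) :
    List (Q.A × Bool) → List (Q.A × Bool) → Prop
  | refl (w : List (Q.A × Bool)) : Homotopic I w w
  | symm {w w' : List (Q.A × Bool)} : Homotopic I w w' → Homotopic I w' w
  | trans {w w' w'' : List (Q.A × Bool)} :
      Homotopic I w w' → Homotopic I w' w'' → Homotopic I w w''
  | cancel (a : Q.A) : Homotopic I [(a, true), (a, false)] []
  | cancel' (a : Q.A) : Homotopic I [(a, false), (a, true)] []
  | rel {r : List Q.A →₀ k} (hr : IsMinimalRel Q k I r) {u v : List Q.A}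
      (hu : u ∈ r.support) (hv : v ∈ r.support) :
      Homotopic I (u.map fun a => (a, true)) (v.map fun a => (a, true))
  | congr (w x : List (Q.A × Bool)) {v v' : List (Q.A × Bool)} :
      Homotopic I v v' → Homotopic I (w ++ v ++ x) (w ++ v' ++ x)

/-- `I` is a monomial admissible ideal of `kQ` : every element is a combination of
paths of length `≥ 2`, membership is detected on supports (monomiality), and `I`
is stable under concatenation with paths on either side. -/
def IsMonomialAdmissible (I : Submodule k (List Q.A →₀ k)) : Prop :=
  (∀ r ∈ I, ∀ p ∈ (r : List Q.A →₀ k).support, Q.IsPath p ∧ 2 ≤ p.length) ∧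
  (∀ r : List Q.A →₀ k, (∀ p ∈ r.support, Finsupp.single p (1 : k) ∈ I) → r ∈ I) ∧
  (∀ r ∈ I, ∀ p ∈ (r : List Q.A →₀ k).support, Finsupp.single p (1 : k) ∈ I) ∧
  (∀ p q : List Q.A, Q.IsPath p → Finsupp.single q (1 : k) ∈ I → Q.IsPath (p ++ q) →
    Finsupp.single (p ++ q) (1 : k) ∈ I) ∧
  (∀ p q : List Q.A, Finsupp.single p (1 : k) ∈ I → Q.IsPath q → Q.IsPath (p ++ q) →
    Finsupp.single (p ++ q) (1 : k) ∈ I)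

/-- A `k`-linear automorphism of `kQ` (fixing the vertices) is the transvection
`φ_{α,u,τ}` when its underlying linear map is `substMap α u τ`. -/
def IsTransvectionE (ψ : (List Q.A →₀ k) ≃ₗ[k] (List Q.A →₀ k))
    (α : Q.A) (u : List Q.A) (τ : k) : Prop :=
  (ψ : (List Q.A →₀ k) →ₗ[k] (List Q.A →₀ k)) = substMap Q k α u τ

/-- The subgroup `T_{<(α,u)}` generated by the transvections `φ_{β,v,τ}` with
`(β,v) < (α,u)`. -/
noncomputable def TltSub (o : Q.PathOrder) (b : Q.A × List Q.A) :
    Subgroup ((List Q.A →₀ k) ≃ₗ[k] (List Q.A →₀ k)) :=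
  Subgroup.closure
    {ψ | ∃ β v τ, Q.IsBypass β v ∧ o.bplt (β, v) b ∧ IsTransvectionE Q k ψ β v τ}

/-- The subgroup `T_{≤(α,u)}` generated by the transvections `φ_{β,v,τ}` with
`(β,v) ≤ (α,u)`. -/
noncomputable def TleSub (o : Q.PathOrder) (b : Q.A × List Q.A) :
    Subgroup ((List Q.A →₀ k) ≃ₗ[k] (List Q.A →₀ k)) :=
  Subgroup.closure
    {ψ | ∃ β v τ, Q.IsBypass β v ∧ o.bple (β, v) b ∧ IsTransvectionE Q k ψ β v τ}

/-- The set `T_{(α,u)} = {φ_{α,u,τ} | τ ∈ k}`. -/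
def TsingleSet (b : Q.A × List Q.A) :
    Set ((List Q.A →₀ k) ≃ₗ[k] (List Q.A →₀ k)) :=
  {ψ | ∃ τ : k, IsTransvectionE Q k ψ b.1 b.2 τ}

/-- `m` is the `<`-maximum of the support of `r`. -/
def IsMaxPath (o : Q.PathOrder) (r : List Q.A →₀ k) (m : List Q.A) : Prop :=
  m ∈ r.support ∧ ∀ p ∈ r.support, p ≠ m → o.lt p m

/-- `B` is the Gröbner basis of the subspace `F` with respect to the path order `o` :
`B` spans `F` and each `r ∈ B` has a leading path `m` (with coefficient `1`, all other
paths of `supp r` being `<`-smaller) whose coefficient in every other element of `B`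
vanishes. -/
def IsGB (o : Q.PathOrder) (F : Submodule k (List Q.A →₀ k))
    (B : Set (List Q.A →₀ k)) : Prop :=
  B ⊆ (F : Set (List Q.A →₀ k)) ∧ Submodule.span k B = F ∧
  ∀ r ∈ B, ∃ m, m ∈ (r : List Q.A →₀ k).support ∧ r m = 1 ∧
    (∀ p ∈ (r : List Q.A →₀ k).support, p ≠ m → o.lt p m) ∧
    ∀ r' ∈ B, r' ≠ r → (r' : List Q.A →₀ k) m = 0

end Linear

theorem aux_supp (k : Type) [Field k] {A : Type} (ψ : Module.End k (List A →₀ k))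
    (f : List A →₀ k) {w : List A} (hw : w ∈ (ψ f).support) :
    ∃ p ∈ f.support, w ∈ (ψ (Finsupp.single p (1 : k))).support := by
  classical
  have hrep : ψ f = f.sum fun p c => c • ψ (Finsupp.single p (1 : k)) := by
    conv_lhs => rw [← Finsupp.sum_single f]
    rw [map_finsuppSum]
    exact Finsupp.sum_congr fun p _ => by
      rw [← map_smul, Finsupp.smul_single, smul_eq_mul, mul_one]
  rw [hrep] at hw
  rcases Finset.mem_biUnion.mp (Finsupp.support_sum hw) with ⟨p, hp, hw2⟩
  exact ⟨p, hp, Finsupp.support_smul hw2⟩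

/-- Let `ψ ∈ T`, let `r ∈ _y(kQ)_x` and let `r'` be a subexpression of
`ψ(r)`.  Let `≃` be the smallest equivalence relation on paths such that `u ≃ v`
whenever `v ∈ supp(ψ(u))`.  If for all `u, v ∈ supp(ψ(r))` with `u ≃ v` one has
`u ∈ supp(r') ↔ v ∈ supp(r')`, then `ψ⁻¹(r')` is a subexpression of `r`. -/
theorem stmt_11 (Q : Quiv) [Fintype Q.V] [Fintype Q.A]
    (k : Type) [Field k] [IsAlgClosed k]
    (hnc : Q.NoCycle) (hnm : Q.NoMultipleArrows)
    (ψ : Module.End k (List Q.A →₀ k)) (hψ : MemT Q k ψ)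
    (x y : Q.V) (r : List Q.A →₀ k)
    (hr : ∀ p ∈ r.support, Q.IsPath p ∧ Q.src p = some x ∧ Q.tgt p = some y)
    (r' : List Q.A →₀ k) (hr' : Subexpr Q k r' (ψ r))
    (hcl : ∀ u ∈ (ψ r).support, ∀ v ∈ (ψ r).support,
      Relation.EqvGen (fun u v => v ∈ (ψ (Finsupp.single u (1 : k))).support) u v →
      (u ∈ r'.support ↔ v ∈ r'.support)) :
    ∃ s : List Q.A →₀ k, ψ s = r' ∧ Subexpr Q k s r := by
  classical
  set R : List Q.A → List Q.A → Prop :=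
    fun u v => v ∈ (ψ (Finsupp.single u (1 : k))).support with hR
  set G : List Q.A → Prop :=
    fun p => ∃ v ∈ r'.support, Relation.EqvGen R p v with hG
  set s : List Q.A →₀ k := r.filter G with hs
  have hsapp : ∀ p, G p → s p = r p := by
    intro p hp
    rw [hs, Finsupp.filter_apply, if_pos hp]
  have hsapp' : ∀ p, ¬ G p → s p = 0 := by
    intro p hp
    rw [hs, Finsupp.filter_apply, if_neg hp]
  have hssub : ∀ p ∈ s.support, G p ∧ p ∈ r.support := by
    intro p hp
    have h0 := Finsupp.mem_support_iff.mp hp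
    by_cases hGp : G p
    · exact ⟨hGp, Finsupp.mem_support_iff.mpr (by rw [← hsapp p hGp]; exact h0)⟩
    · exact absurd (hsapp' p hGp) h0
  have hGsupp : ∀ w ∈ (ψ s).support, G w := by
    intro w hw
    obtain ⟨p, hp, hwp⟩ := aux_supp k ψ s hw
    obtain ⟨v, hv, hpv⟩ := (hssub p hp).1
    exact ⟨v, hv, Relation.EqvGen.trans _ _ _
      (Relation.EqvGen.symm _ _ (Relation.EqvGen.rel _ _ hwp)) hpv⟩
  have hNsupp : ∀ w ∈ (ψ (r - s)).support, ¬ G w := by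
    intro w hw hGw
    obtain ⟨p, hp, hwp⟩ := aux_supp k ψ (r - s) hw
    have hGp : ¬ G p := by
      intro hGp
      have : (r - s) p = 0 := by rw [Finsupp.sub_apply, hsapp p hGp, sub_self]
      exact Finsupp.mem_support_iff.mp hp this
    obtain ⟨v, hv, hwv⟩ := hGw
    exact hGp ⟨v, hv, Relation.EqvGen.trans _ _ _ (Relation.EqvGen.rel _ _ hwp) hwv⟩
  have hGr' : ∀ u ∈ r'.support, G u := fun u hu => ⟨u, hu, Relation.EqvGen.refl u⟩
  have hsplit : ∀ w, (ψ r) w = (ψ s) w + (ψ (r - s)) w := by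
    intro w
    have h1 : s + (r - s) = r := by abel
    rw [← h1, map_add, Finsupp.add_apply, h1]
  refine ⟨s, ?_, ?_, ?_⟩
  · ext w
    by_cases hGw : G w
    · have hd0 : (ψ (r - s)) w = 0 := by
        by_contra h
        exact hNsupp w (Finsupp.mem_support_iff.mpr h) hGw
      have h1 : (ψ s) w = (ψ r) w := by rw [hsplit w, hd0, add_zero]
      by_cases hw' : w ∈ r'.support
      · rw [h1, ← hr'.2 w hw']
      · have hw0 : r' w = 0 := Finsupp.notMem_support_iff.mp hw'
        rw [h1, hw0]
        by_contra h
        have hwψr : w ∈ (ψ r).support := Finsupp.mem_support_iff.mpr h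
        obtain ⟨v, hv, hwv⟩ := hGw
        exact hw' ((hcl w hwψr v (hr'.1 hv) hwv).mpr hv)
    · have h1 : (ψ s) w = 0 := by
        by_contra h
        exact hGw (hGsupp w (Finsupp.mem_support_iff.mpr h))
      have h2 : r' w = 0 := by
        by_contra h
        exact hGw (hGr' w (Finsupp.mem_support_iff.mpr h))
      rw [h1, h2]
  · intro p hp
    exact (hssub p hp).2
  · intro p hp
    exact hsapp p (hssub p hp).1

end Quiv
end

section
/- Let ψ ∈ T, let r ∈ _y(kQ)_x, and let u ∈ supp(r). Then at least one of the following holds: (1) u ∈ supp(ψ(r)); (2) there exists v ∈ supp(r) with v ≠ u and u ∈ supp(ψ(v)). As a consequence, if u is not derived of v for any v ∈ supp(r), then u ∈ supp(ψ(r)) and u^*(ψ(r)) = u^*(r). -/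
attribute [local instance] Classical.propDecidable

namespace Quiv

section Aux

variable {Q : Quiv}

lemma repl_refl (u : List Q.A) : Q.Repl 0 u u := by
  induction u with
  | nil => exact .nil
  | cons a u ih => exact .keep a ih

lemma repl_eq_of_zero {n : ℕ} {u v : List Q.A} (h : Q.Repl n u v) (hn : n = 0) : u = v := by
  induction h with
  | nil => rfl
  | keep a h ih => rw [ih hn]
  | repl hb h ih => simp at hn

lemma bypass_len (hnm : Q.NoMultipleArrows) {a : Q.A} {p : List Q.A}
    (hb : Q.IsBypass a p) : 2 ≤ p.length := by
  obtain ⟨⟨hne, _⟩, hs, ht, hna⟩ := hb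
  match p, hne, hs, ht, hna with
  | [b], _, hs, ht, hna =>
    simp [Quiv.src, Quiv.tgt] at hs ht
    exact absurd (by rw [hnm b a hs ht]) hna
  | (b :: c :: l), _, _, _, _ => simp

lemma repl_length (hnm : Q.NoMultipleArrows) {n : ℕ} {u v : List Q.A}
    (h : Q.Repl n u v) : u.length + n ≤ v.length := by
  induction h with
  | nil => simp
  | keep a h ih => simp only [List.length_cons]; omega
  | repl hb h ih =>
    have := bypass_len hnm hb
    simp only [List.length_cons, List.length_append]
    omega

lemma repl_src {n : ℕ} {u v : List Q.A} (h : Q.Repl n u v) : Q.src v = Q.src u := by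
  induction h with
  | nil => rfl
  | keep a h ih => simp [Quiv.src]
  | @repl a p n u v hb h ih =>
    obtain ⟨⟨hne, _⟩, hs, _, _⟩ := hb
    match p, hne, hs with
    | b :: p', _, hs => simpa [Quiv.src] using hs

lemma repl_nil_iff {n : ℕ} {u v : List Q.A} (h : Q.Repl n u v) : u = [] ↔ v = [] := by
  have hsrc := repl_src h
  cases u <;> cases v <;> simp_all [Quiv.src]

lemma repl_tgt {n : ℕ} {u v : List Q.A} (h : Q.Repl n u v) : Q.tgt v = Q.tgt u := by
  induction h with
  | nil => rfl
  | @keep a n u v h ih =>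
    rcases eq_or_ne u [] with rfl | hu
    · rw [(repl_nil_iff h).mp rfl]
    · have hv : v ≠ [] := fun hv => hu ((repl_nil_iff h).mpr hv)
      match u, v, hu, hv with
      | b :: u', c :: v', _, _ =>
        simpa [Quiv.tgt, List.getLast?_cons_cons] using ih
  | @repl a p n u v hb h ih =>
    obtain ⟨⟨hne, _⟩, _, ht, _⟩ := hb
    rcases eq_or_ne u [] with rfl | hu
    · have : v = [] := (repl_nil_iff h).mp rfl
      subst this
      simpa [Quiv.tgt, List.append_nil] using ht
    · have hv : v ≠ [] := fun hv => hu ((repl_nil_iff h).mpr hv)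
      rw [Quiv.tgt, List.getLast?_append_of_ne_nil _ hv, ← Quiv.tgt, ih]
      match u, hu with
      | b :: u', _ => simp [Quiv.tgt, List.getLast?_cons_cons]

lemma repl_isPath {n : ℕ} {u v : List Q.A} (h : Q.Repl n u v) (hp : Q.IsPath u) :
    Q.IsPath v := by
  induction h with
  | nil => exact hp
  | @keep a n u v h ih =>
    obtain ⟨-, hch⟩ := hp
    obtain ⟨hhd, hch'⟩ := List.isChain_cons.mp hch
    rcases eq_or_ne u [] with rfl | hu
    · rw [(repl_nil_iff h).mp rfl]
      exact ⟨by simp, List.isChain_singleton a⟩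
    · obtain ⟨hvne, hvch⟩ := ih ⟨hu, hch'⟩
      refine ⟨by simp, List.isChain_cons.mpr ⟨?_, hvch⟩⟩
      intro y hy
      have hsrc := repl_src h
      match u, hu with
      | b :: u', _ =>
        simp only [Quiv.src, List.head?_cons, Option.map_some] at hsrc
        match v, hvne, hy, hsrc with
        | c :: v', _, hy, hsrc =>
          simp only [List.head?_cons, Option.mem_def, Option.some.injEq] at hy
          subst hy
          simp only [List.head?_cons, Option.map_some, Option.some.injEq] at hsrc
          have := hhd b rfl
          rw [this, ← hsrc]
  | @repl a p n u v hb h ih =>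
    obtain ⟨⟨hpne, hpch⟩, hps, hpt, -⟩ := hb
    obtain ⟨-, hch⟩ := hp
    obtain ⟨hhd, hch'⟩ := List.isChain_cons.mp hch
    rcases eq_or_ne u [] with rfl | hu
    · rw [(repl_nil_iff h).mp rfl, List.append_nil]
      exact ⟨hpne, hpch⟩
    · obtain ⟨hvne, hvch⟩ := ih ⟨hu, hch'⟩
      refine ⟨by simp [hpne], hpch.append hvch ?_⟩
      intro x hx y hy
      simp only [Quiv.tgt, Option.map_eq_some_iff] at hpt
      obtain ⟨x', hx', hxt⟩ := hpt
      rw [Option.mem_def] at hx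
      rw [hx'] at hx
      injection hx with hx
      subst hx
      -- show Q.t x = Q.s y
      have hsrc := repl_src h
      match u, hu with
      | b :: u', _ =>
        simp only [Quiv.src, List.head?_cons, Option.map_some] at hsrc
        match v, hvne, hy, hsrc with
        | c :: v', _, hy, hsrc =>
          simp only [List.head?_cons, Option.mem_def, Option.some.injEq] at hy
          subst hy
          simp only [List.head?_cons, Option.map_some, Option.some.injEq] at hsrc
          rw [hxt, hhd b rfl, ← hsrc]

lemma repl_append_split {n : ℕ} {q u w : List Q.A} (h : Q.Repl n (q ++ u) w) :
    ∃ n1 n2 w1 w2, w = w1 ++ w2 ∧ n = n1 + n2 ∧ Q.Repl n1 q w1 ∧ Q.Repl n2 u w2 := by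
  induction q generalizing n w with
  | nil => exact ⟨0, n, [], w, rfl, (Nat.zero_add n).symm, .nil, h⟩
  | cons a q ih =>
    cases h with
    | keep _ h' =>
      obtain ⟨n1, n2, w1, w2, rfl, rfl, h1, h2⟩ := ih h'
      exact ⟨n1, n2, a :: w1, w2, rfl, rfl, .keep a h1, h2⟩
    | @repl _ pb _ _ _ hb h' =>
      obtain ⟨n1, n2, w1, w2, rfl, rfl, h1, h2⟩ := ih h'
      exact ⟨n1 + 1, n2, pb ++ w1, w2, (List.append_assoc pb w1 w2).symm, by omega,
        .repl hb h1, h2⟩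

lemma repl_comp (hnm : Q.NoMultipleArrows) {m n : ℕ} {u v w : List Q.A}
    (h1 : Q.Repl m u v) (h2 : Q.Repl n v w) : ∃ p, Q.Repl p u w := by
  induction h1 generalizing n w with
  | nil => cases h2; exact ⟨0, .nil⟩
  | keep a h ih =>
    cases h2 with
    | keep _ h' => obtain ⟨p, hp⟩ := ih h'; exact ⟨p, .keep a hp⟩
    | repl hb h' => obtain ⟨p, hp⟩ := ih h'; exact ⟨p + 1, .repl hb hp⟩
  | @repl a q m' u' v' hb h ih =>
    obtain ⟨n1, n2, w1, w2, rfl, rfl, hq, hv⟩ := repl_append_split h2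
    obtain ⟨p, hp⟩ := ih hv
    have hb1 : Q.IsBypass a w1 := by
      rcases Nat.eq_zero_or_pos n1 with h0 | h0
      · rw [← repl_eq_of_zero hq h0]; exact hb
      · refine ⟨repl_isPath hq hb.1, ?_, ?_, ?_⟩
        · rw [repl_src hq, hb.2.1]
        · rw [repl_tgt hq, hb.2.2.1]
        · intro hE
          have hl := repl_length hnm hq
          have h2l := bypass_len hnm hb
          rw [hE] at hl; simp at hl; omega
    exact ⟨p + 1, .repl hb1 hp⟩


variable {k : Type} [Field k]

lemma mulF_single (u : List Q.A) (c : k) (g : List Q.A →₀ k) :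
    Quiv.mulF Q k (Finsupp.single u c) g
      = c • Finsupp.mapDomain (fun q => u ++ q) g := by
  rw [Quiv.mulF, Finsupp.sum_single_index (by simp), Finsupp.mapDomain, Finsupp.smul_sum]
  congr 1
  funext q d
  rw [Finsupp.smul_single, smul_eq_mul]

lemma mulF_add_left (f1 f2 g : List Q.A →₀ k) :
    Quiv.mulF Q k (f1 + f2) g = Quiv.mulF Q k f1 g + Quiv.mulF Q k f2 g := by
  rw [Quiv.mulF, Quiv.mulF, Quiv.mulF]
  apply Finsupp.sum_add_index' (fun p => by simp)
  intro p c1 c2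
  rw [← Finsupp.sum_add]
  congr 1
  funext q d
  rw [add_mul, Finsupp.single_add]

lemma substPoly_eq {α : Q.A} {p : List Q.A}
    (hb : Q.IsBypass α p) (τ : k) (v : List Q.A) :
    ∃ f : List Q.A →₀ k, Quiv.substPoly Q k α p τ v = Finsupp.single v 1 + f ∧
      ∀ w ∈ f.support, ∃ t, 1 ≤ t ∧ Q.Repl t v w := by
  induction v with
  | nil => exact ⟨0, by simp [Quiv.substPoly], by simp⟩
  | cons a rest ih =>
    obtain ⟨f, hf, hfd⟩ := ih
    have base : ∀ g : List Q.A →₀ k, Quiv.mulF Q k (Finsupp.single [a] (1:k))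
        (Finsupp.single rest 1 + g)
        = Finsupp.single (a :: rest) 1 + Finsupp.mapDomain (fun q => a :: q) g := by
      intro g
      rw [mulF_single, one_smul, Finsupp.mapDomain_add, Finsupp.mapDomain_single]
      rfl
    have hmd : ∀ (g : List Q.A →₀ k) (F : List Q.A → List Q.A) (w : List Q.A),
        w ∈ (Finsupp.mapDomain F g).support →
        ∃ w', w' ∈ g.support ∧ w = F w' := by
      intro g F w hw
      have := Finsupp.mapDomain_support hw
      simp only [Finset.mem_image] at this
      obtain ⟨w', hw', rfl⟩ := this
      exact ⟨w', hw', rfl⟩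
    by_cases ha : a = α
    · subst ha
      refine ⟨Finsupp.mapDomain (fun q => a :: q) f
          + τ • Finsupp.mapDomain (fun q => p ++ q) (Finsupp.single rest 1 + f), ?_, ?_⟩
      · show Quiv.mulF Q k (Quiv.arrowImg Q k a p τ a) (Quiv.substPoly Q k a p τ rest) = _
        rw [hf, Quiv.arrowImg, if_pos rfl, mulF_add_left, base,
          Finsupp.smul_single, smul_eq_mul, mul_one, mulF_single]
        abel
      · intro w hw
        rcases Finset.mem_union.mp (Finsupp.support_add hw) with hw | hw
        · obtain ⟨w', hw', rfl⟩ := hmd _ (fun q => a :: q) _ hw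
          obtain ⟨t, ht, hr⟩ := hfd w' hw'
          exact ⟨t, ht, .keep a hr⟩
        · have hw2 := Finsupp.support_smul hw
          obtain ⟨w', hw', rfl⟩ := hmd _ (fun q => p ++ q) _ hw2
          rcases Finset.mem_union.mp (Finsupp.support_add hw') with hw' | hw'
          · have hwr : w' = rest := by
              simpa using Finsupp.support_single_subset hw'
            subst hwr
            exact ⟨1, le_refl 1, .repl hb (repl_refl w')⟩
          · obtain ⟨t, ht, hr⟩ := hfd w' hw'
            exact ⟨t + 1, by omega, .repl hb hr⟩
    · refine ⟨Finsupp.mapDomain (fun q => a :: q) f, ?_, ?_⟩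
      · show Quiv.mulF Q k (Quiv.arrowImg Q k α p τ a) (Quiv.substPoly Q k α p τ rest) = _
        rw [hf, Quiv.arrowImg, if_neg ha, base]
      · intro w hw
        obtain ⟨w', hw', rfl⟩ := hmd _ (fun q => a :: q) _ hw
        obtain ⟨t, ht, hr⟩ := hfd w' hw'
        exact ⟨t, ht, .keep a hr⟩

/-- The key invariant: `ψ` maps each path to itself plus terms supported on
derived paths. -/
def Good (Q : Quiv) (k : Type) [Field k] (ψ : Module.End k (List Q.A →₀ k)) : Prop :=
  ∀ v : List Q.A, ∃ f : List Q.A →₀ k,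
    ψ (Finsupp.single v 1) = Finsupp.single v 1 + f ∧
    ∀ w ∈ f.support, ∃ t, 1 ≤ t ∧ Q.Repl t v w

lemma good_one : Good Q k 1 := fun v => ⟨0, by simp, by simp⟩

lemma good_single_smul {ψ : Module.End k (List Q.A →₀ k)} {v : List Q.A}
    {X : List Q.A →₀ k} (hv : ψ (Finsupp.single v 1) = Finsupp.single v (1:k) + X)
    (c : k) : ψ (Finsupp.single v c) = Finsupp.single v c + c • X := by
  have h1 : Finsupp.single v c = c • Finsupp.single v (1:k) := by
    rw [Finsupp.smul_single, smul_eq_mul, mul_one]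
  rw [h1, map_smul, hv, smul_add]

lemma good_mul (hnm : Q.NoMultipleArrows) {ψ1 ψ2 : Module.End k (List Q.A →₀ k)}
    (h1 : Good Q k ψ1) (h2 : Good Q k ψ2) : Good Q k (ψ1 * ψ2) := by
  intro v
  obtain ⟨f, hf, hfd⟩ := h2 v
  choose G hG hGd using h1
  refine ⟨G v + f + f.sum fun w c => c • G w, ?_, ?_⟩
  · rw [Module.End.mul_apply, hf, map_add, hG]
    have hψf : ψ1 f = f + f.sum fun w c => c • G w := by
      conv_lhs => rw [← Finsupp.sum_single f]
      rw [map_finsuppSum]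
      calc f.sum (fun w c => ψ1 (Finsupp.single w c))
          = f.sum fun w c => Finsupp.single w c + c • G w := by
            apply Finsupp.sum_congr
            intro w _
            exact good_single_smul (hG w) (f w)
        _ = f.sum (fun w c => Finsupp.single w c) + f.sum fun w c => c • G w :=
            Finsupp.sum_add
        _ = _ := by rw [Finsupp.sum_single]
    rw [hψf]
    abel
  · intro w0 hw0
    rcases Finset.mem_union.mp (Finsupp.support_add hw0) with hw0 | hw0
    · rcases Finset.mem_union.mp (Finsupp.support_add hw0) with hw0 | hw0
      · exact hGd v w0 hw0
      · exact hfd w0 hw0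
    · have := Finsupp.support_sum hw0
      rw [Finset.mem_biUnion] at this
      obtain ⟨w, hw, hw0'⟩ := this
      have hw0'' : w0 ∈ (G w).support := Finsupp.support_smul hw0'
      obtain ⟨s, hs, hrs⟩ := hGd w w0 hw0''
      obtain ⟨t, ht, hrt⟩ := hfd w hw
      obtain ⟨pp, hpp⟩ := repl_comp hnm hrt hrs
      refine ⟨pp, ?_, hpp⟩
      rcases Nat.eq_zero_or_pos pp with h0 | h0
      · exfalso
        have heq := repl_eq_of_zero hpp h0
        have l1 := repl_length hnm hrt
        have l2 := repl_length hnm hrs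
        rw [heq] at l1
        omega
      · exact h0


lemma good_substMap {α : Q.A} {p : List Q.A} (hb : Q.IsBypass α p) (τ : k) :
    Good Q k (Quiv.substMap Q k α p τ) := by
  intro v
  obtain ⟨f, hf, hfd⟩ := substPoly_eq hb τ v
  refine ⟨f, ?_, hfd⟩
  rw [Quiv.substMap, Finsupp.linearCombination_single, one_smul, hf]

lemma good_memT (hnm : Q.NoMultipleArrows) {ψ : Module.End k (List Q.A →₀ k)}
    (hψ : Quiv.MemT Q k ψ) : Good Q k ψ := by
  obtain ⟨L, hL, rfl⟩ := hψ
  induction L with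
  | nil => simpa using good_one
  | cons x L ih =>
    rw [List.map_cons, List.prod_cons]
    exact good_mul hnm (good_substMap (hL x (by simp)) x.2.2)
      (ih fun y hy => hL y (List.mem_cons_of_mem x hy))

end Aux

/-- Let `ψ ∈ T`, `r ∈ _y(kQ)_x` and `u ∈ supp(r)`.  Then
`u ∈ supp(ψ(r))`, or there exists `v ∈ supp(r)` with `v ≠ u` and `u ∈ supp(ψ(v))`.
As a consequence, if `u` is not derived of `v` for any `v ∈ supp(r)`, then
`u ∈ supp(ψ(r))` and `u^*(ψ(r)) = u^*(r)`. -/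
theorem stmt_12 (Q : Quiv) [Fintype Q.V] [Fintype Q.A]
    (k : Type) [Field k] [IsAlgClosed k]
    (hnc : Q.NoCycle) (hnm : Q.NoMultipleArrows)
    (ψ : Module.End k (List Q.A →₀ k)) (hψ : MemT Q k ψ)
    (x y : Q.V) (r : List Q.A →₀ k)
    (hr : ∀ p ∈ r.support, Q.IsPath p ∧ Q.src p = some x ∧ Q.tgt p = some y)
    (u : List Q.A) (hu : u ∈ r.support) :
    (u ∈ (ψ r).support ∨
      ∃ v ∈ r.support, v ≠ u ∧ u ∈ (ψ (Finsupp.single v (1 : k))).support) ∧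
    ((∀ v ∈ r.support, ¬ Q.Derived v u) →
      u ∈ (ψ r).support ∧ (ψ r) u = r u) := by
  have hgood : Good Q k ψ := good_memT hnm hψ
  choose F hF hFd using hgood
  have hψr : ψ r = r + r.sum fun v c => c • F v := by
    conv_lhs => rw [← Finsupp.sum_single r]
    rw [map_finsuppSum]
    calc r.sum (fun v c => ψ (Finsupp.single v c))
        = r.sum fun v c => Finsupp.single v c + c • F v :=
          Finsupp.sum_congr fun v _ => good_single_smul (hF v) (r v)
      _ = r.sum (fun v c => Finsupp.single v c) + r.sum fun v c => c • F v :=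
          Finsupp.sum_add
      _ = _ := by rw [Finsupp.sum_single]
  have heval : (ψ r) u = r u + r.sum fun v c => c * F v u := by
    rw [hψr, Finsupp.add_apply, Finsupp.sum_apply]
    simp only [Finsupp.smul_apply, smul_eq_mul]
  have hru : r u ≠ 0 := Finsupp.mem_support_iff.mp hu
  have hder : ∀ v, u ∈ (F v).support → Q.Derived v u ∧ v ≠ u := by
    intro v hv
    obtain ⟨t, ht, hr'⟩ := hFd v u hv
    refine ⟨⟨t, ht, hr'⟩, ?_⟩
    intro hvu
    have hl := repl_length hnm hr'
    rw [hvu] at hl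
    omega
  constructor
  · by_cases hmem : u ∈ (ψ r).support
    · exact Or.inl hmem
    · right
      have h0 : (ψ r) u = 0 := Finsupp.notMem_support_iff.mp hmem
      have hsum : (r.sum fun v c => c * F v u) ≠ 0 := by
        intro hS
        rw [heval, hS, add_zero] at h0
        exact hru h0
      rw [Finsupp.sum] at hsum
      obtain ⟨v, hv, hvne⟩ := Finset.exists_ne_zero_of_sum_ne_zero hsum
      have hFvu : F v u ≠ 0 := fun h => hvne (by rw [h, mul_zero])
      have hFv : u ∈ (F v).support := Finsupp.mem_support_iff.mpr hFvu
      obtain ⟨-, hne⟩ := hder v hFv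
      refine ⟨v, hv, hne, ?_⟩
      rw [Finsupp.mem_support_iff, hF v, Finsupp.add_apply]
      have : (Finsupp.single v (1:k)) u = 0 := by
        rw [Finsupp.single_apply, if_neg hne]
      rw [this, zero_add]
      exact hFvu
  · intro hnd
    have hS : (r.sum fun v c => c * F v u) = 0 := by
      rw [Finsupp.sum]
      apply Finset.sum_eq_zero
      intro v hv
      rcases eq_or_ne (F v u) 0 with h | h
      · rw [h, mul_zero]
      · exact absurd (hder v (Finsupp.mem_support_iff.mpr h)).1 (hnd v hv)
    have he : (ψ r) u = r u := by rw [heval, hS, add_zero]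
    exact ⟨Finsupp.mem_support_iff.mpr (by rw [he]; exact hru), he⟩

end Quiv
end
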